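/- A nonempty subset L of the graph group G_F is convex if and only if for each a ∈ G the set aL := {ax : x ∈ L} has a unique minimal element with respect to the partial order ≤. -/

import Mathlib

/-!
If `|xy| < |x| + |y|`, some letter `c` cancels both at the end of a geodesic word for `x` and at
the start of one for `y`; then `x c⁻¹ ≤ x` lies on a geodesic from `x` to `xy`. So a convex set
with two minimal elements `m₁ ≠ m₂` (where `m₁ ≰ m₂`) contains an element strictly below `m₁`.
The exchange property rests on the normal form theorem: a word in which no letter is followed by
its inverse with only commuting letters in between is geodesic. It follows by letting `G_F` act,
through `gᵢ ↦ (prepend gᵢ and cancel)`, on such words modulo transpositions of adjacent commuting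
letters, since reduced words representing the same element then differ only by transpositions.

Conversely, if `y⁻¹L` has a least element `m` and `y` lies between `x, z ∈ L`, the triangle
inequality through `m` gives `dist x z ≤ dist x y + dist y z - 2|m|`, so `m = 1` and `y ∈ L`.
-/

open Pointwise

namespace GraphGroupPaper

/-- The set of commutator relators: `gᵢ` and `gⱼ` commute for every pair of distinct
`i, j` with `{i,j} ∉ F`. -/
def Rels (k : ℕ) (F : Set (Sym2 (Fin k))) : Set (FreeGroup (Fin k)) :=
  {w | ∃ i j : Fin k, i ≠ j ∧ s(i, j) ∉ F ∧
      w = FreeGroup.of i * FreeGroup.of j * (FreeGroup.of i)⁻¹ * (FreeGroup.of j)⁻¹}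

/-- The graph group `G_F` with generators `g₁, …, g_k` and relations `gᵢgⱼ = gⱼgᵢ`
for all distinct `i, j` with `{i,j} ∉ F`. -/
abbrev Grp (k : ℕ) (F : Set (Sym2 (Fin k))) := PresentedGroup (Rels k F)

/-- The generator `gᵢ` of the graph group. -/
def gen (k : ℕ) (F : Set (Sym2 (Fin k))) (i : Fin k) : Grp k F :=
  PresentedGroup.of i

/-- The group element corresponding to a symbol: `(i, true)` stands for `gᵢ`,
`(i, false)` stands for `gᵢ⁻¹`. -/
def sym (k : ℕ) (F : Set (Sym2 (Fin k))) (α : Fin k × Bool) : Grp k F :=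
  if α.2 then gen k F α.1 else (gen k F α.1)⁻¹

/-- The product of the word `l` of symbols, as an element of the graph group. -/
def wordProd (k : ℕ) (F : Set (Sym2 (Fin k))) (l : List (Fin k × Bool)) : Grp k F :=
  (l.map (sym k F)).prod

/-- `|x|` : the length of a shortest word in the symbols representing `x`. -/
noncomputable def len {k : ℕ} {F : Set (Sym2 (Fin k))} (x : Grp k F) : ℕ :=
  sInf {n | ∃ l : List (Fin k × Bool), wordProd k F l = x ∧ l.length = n}

/-- The partial order on `G_F`:  `x ≤ y` iff `|y| = |x| + |x⁻¹y|`. -/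
def le {k : ℕ} {F : Set (Sym2 (Fin k))} (x y : Grp k F) : Prop :=
  len y = len x + len (x⁻¹ * y)

/-- `m` is the meet `x ∧ y` (greatest lower bound w.r.t. `le`). -/
def IsMeet {k : ℕ} {F : Set (Sym2 (Fin k))} (x y m : Grp k F) : Prop :=
  le m x ∧ le m y ∧ ∀ w, le w x → le w y → le w m

/-- `j` is the (finite) join `x ∨ y` (least upper bound w.r.t. `le`);
`x ∨ y` is finite iff such a `j` exists. -/
def IsJoin {k : ℕ} {F : Set (Sym2 (Fin k))} (x y j : Grp k F) : Prop :=
  le x j ∧ le y j ∧ ∀ w, le x w → le y w → le j w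

/-- `j` is the (finite) join of the set `S`. -/
def IsJoinSet {k : ℕ} {F : Set (Sym2 (Fin k))} (S : Set (Grp k F)) (j : Grp k F) : Prop :=
  (∀ s ∈ S, le s j) ∧ ∀ w, (∀ s ∈ S, le s w) → le j w

/-- `y` is a segment of `a` if `a = x·y·z` for some `x, z`. -/
def Segment {k : ℕ} {F : Set (Sym2 (Fin k))} (y a : Grp k F) : Prop :=
  ∃ x z, a = x * y * z ∧ len a = len x + len y + len z

/-- The left-invariant metric `dist(x,y) = |x⁻¹y|`. -/
noncomputable def dist {k : ℕ} {F : Set (Sym2 (Fin k))} (x y : Grp k F) : ℕ :=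
  len (x⁻¹ * y)

/-- A nonempty set `L` is convex if `x, z ∈ L` and `dist(x,y) + dist(y,z) = dist(x,z)`
imply `y ∈ L`. -/
def ConvexSet {k : ℕ} {F : Set (Sym2 (Fin k))} (L : Set (Grp k F)) : Prop :=
  L.Nonempty ∧ ∀ x z y : Grp k F, x ∈ L → z ∈ L →
    dist x y + dist y z = dist x z → y ∈ L

/-- An ideal: nonempty, downward closed, and closed under finite joins. -/
def IdealSet {k : ℕ} {F : Set (Sym2 (Fin k))} (I : Set (Grp k F)) : Prop :=
  I.Nonempty ∧ (∀ x ∈ I, ∀ y, le y x → y ∈ I) ∧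
    (∀ x ∈ I, ∀ y ∈ I, ∀ j, IsJoin x y j → j ∈ I)

/-- `H` is closed if both `H` and `H⁻¹` are ideals. -/
def ClosedSet {k : ℕ} {F : Set (Sym2 (Fin k))} (H : Set (Grp k F)) : Prop :=
  IdealSet H ∧ IdealSet H⁻¹

/-- `m` is a minimal element of `S` w.r.t. `le`. -/
def MinimalIn {k : ℕ} {F : Set (Sym2 (Fin k))} (S : Set (Grp k F)) (m : Grp k F) : Prop :=
  m ∈ S ∧ ∀ x ∈ S, le x m → x = m

/-- `l` is a reduced (i.e. shortest) word representing `x`. -/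
def MinWord {k : ℕ} {F : Set (Sym2 (Fin k))} (x : Grp k F) (l : List (Fin k × Bool)) : Prop :=
  wordProd k F l = x ∧ l.length = len x

open Classical in
/-- `#_α(x)`: the number of occurrences of the symbol `α` (not counting `α⁻¹`)
in a reduced word representing `x`. -/
noncomputable def symCount {k : ℕ} {F : Set (Sym2 (Fin k))} (α : Fin k × Bool)
    (x : Grp k F) : ℕ :=
  if h : ∃ l, MinWord x l then h.choose.count α else 0

/-- The symbol `α` occurs in `x`. -/
def Occurs {k : ℕ} {F : Set (Sym2 (Fin k))} (α : Fin k × Bool) (x : Grp k F) : Prop :=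
  0 < symCount α x

/-- `α` is a maximal symbol of `x`, i.e. `xα⁻¹ ≤ x`. -/
def MaxSym {k : ℕ} {F : Set (Sym2 (Fin k))} (α : Fin k × Bool) (x : Grp k F) : Prop :=
  le (x * (sym k F α)⁻¹) x

/-- A peak: an element with precisely one maximal symbol. -/
def IsPeak {k : ℕ} {F : Set (Sym2 (Fin k))} (p : Grp k F) : Prop :=
  ∃! α : Fin k × Bool, MaxSym α p

/-- An `α`-peak: a peak whose unique maximal symbol is `α`. -/
def AlphaPeak {k : ℕ} {F : Set (Sym2 (Fin k))} (α : Fin k × Bool) (p : Grp k F) : Prop :=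
  MaxSym α p ∧ ∀ β, MaxSym β p → β = α

/-- The set of generator indices occurring in `b`. -/
def Support {k : ℕ} {F : Set (Sym2 (Fin k))} (b : Grp k F) : Set (Fin k) :=
  {i | Occurs (i, true) b ∨ Occurs (i, false) b}

/-- `b` is connected: the generators occurring in `b` induce a connected subgraph of
the graph `([k], F)`. -/
def Conn {k : ℕ} {F : Set (Sym2 (Fin k))} (b : Grp k F) : Prop :=
  (SimpleGraph.induce (Support b) (SimpleGraph.fromEdgeSet F)).Connected

/-- `b` is cyclically reduced: `b ∧ b⁻¹ = 1`. -/
def CycRed {k : ℕ} {F : Set (Sym2 (Fin k))} (b : Grp k F) : Prop :=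
  IsMeet b b⁻¹ 1

variable {k : ℕ} {F : Set (Sym2 (Fin k))}

/-! ### Letters, words and length -/

def letterInv (a : Fin k × Bool) : Fin k × Bool := (a.1, !a.2)

@[simp] lemma letterInv_letterInv (a : Fin k × Bool) : letterInv (letterInv a) = a := by
  simp [letterInv]

@[simp] lemma letterInv_fst (a : Fin k × Bool) : (letterInv a).1 = a.1 := rfl

def LetterCommute (F : Set (Sym2 (Fin k))) (a b : Fin k × Bool) : Prop :=
  a.1 ≠ b.1 ∧ s(a.1, b.1) ∉ F

namespace LetterCommute

variable {a b : Fin k × Bool}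

lemma symm (h : LetterCommute F a b) : LetterCommute F b a :=
  ⟨h.1.symm, by rw [Sym2.eq_swap]; exact h.2⟩

@[simp] lemma letterInv_left : LetterCommute F (letterInv a) b ↔ LetterCommute F a b := Iff.rfl

@[simp] lemma letterInv_right : LetterCommute F a (letterInv b) ↔ LetterCommute F a b := Iff.rfl

lemma ne_letterInv (h : LetterCommute F a b) : b ≠ letterInv a :=
  fun hb => h.1 (by rw [hb, letterInv_fst])

end LetterCommute

lemma wordProd_cons (a : Fin k × Bool) (l : List (Fin k × Bool)) :
    wordProd k F (a :: l) = sym k F a * wordProd k F l := by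
  simp [wordProd]

lemma wordProd_append (l₁ l₂ : List (Fin k × Bool)) :
    wordProd k F (l₁ ++ l₂) = wordProd k F l₁ * wordProd k F l₂ := by
  simp [wordProd]

lemma sym_letterInv (a : Fin k × Bool) : sym k F (letterInv a) = (sym k F a)⁻¹ := by
  obtain ⟨i, _ | _⟩ := a <;> simp [sym, letterInv]

lemma wordProd_reverse_map_letterInv (l : List (Fin k × Bool)) :
    wordProd k F (l.reverse.map letterInv) = (wordProd k F l)⁻¹ := by
  induction l with
  | nil => simp [wordProd]
  | cons a l ih =>
    rw [List.reverse_cons, List.map_append, wordProd_append, ih, wordProd_cons]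
    simp [wordProd, sym_letterInv]

lemma gen_commute {i j : Fin k} (hij : i ≠ j) (hF : s(i, j) ∉ F) :
    Commute (gen k F i) (gen k F j) := by
  rw [← commutatorElement_eq_one_iff_commute]
  have hrel : PresentedGroup.mk (Rels k F)
      (FreeGroup.of i * FreeGroup.of j * (FreeGroup.of i)⁻¹ * (FreeGroup.of j)⁻¹) = 1 :=
    (QuotientGroup.eq_one_iff _).2 (Subgroup.subset_normalClosure ⟨i, j, hij, hF, rfl⟩)
  simpa [gen, PresentedGroup.of, commutatorElement_def] using hrel

lemma LetterCommute.commute_sym {a b : Fin k × Bool} (h : LetterCommute F a b) :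
    Commute (sym k F a) (sym k F b) := by
  have hg := gen_commute (F := F) h.1 h.2
  obtain ⟨i, _ | _⟩ := a <;> obtain ⟨j, _ | _⟩ := b <;>
    simp [sym, hg, hg.inv_left, hg.inv_right]

lemma commute_sym_wordProd {a : Fin k × Bool} {l : List (Fin k × Bool)}
    (h : ∀ b ∈ l, LetterCommute F a b) : Commute (sym k F a) (wordProd k F l) := by
  induction l with
  | nil => exact Commute.one_right _
  | cons b l ih =>
    rw [wordProd_cons]
    exact (h b (by simp)).commute_sym.mul_right (ih fun c hc => h c (by simp [hc]))

lemma exists_wordProd_eq (x : Grp k F) : ∃ l, wordProd k F l = x := by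
  let H : Subgroup (Grp k F) :=
    { carrier := Set.range (wordProd k F)
      one_mem' := ⟨[], rfl⟩
      mul_mem' := by
        rintro _ _ ⟨l₁, rfl⟩ ⟨l₂, rfl⟩
        exact ⟨l₁ ++ l₂, wordProd_append l₁ l₂⟩
      inv_mem' := by
        rintro _ ⟨l, rfl⟩
        exact ⟨_, wordProd_reverse_map_letterInv l⟩ }
  exact PresentedGroup.generated_by _ H (fun i => ⟨[(i, true)], by simp [wordProd, sym, gen]⟩) x

lemma exists_minWord (x : Grp k F) : ∃ l, MinWord x l := by
  obtain ⟨l, hl⟩ := exists_wordProd_eq x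
  exact Nat.sInf_mem (s := {n | ∃ l, wordProd k F l = x ∧ l.length = n}) ⟨_, l, hl, rfl⟩

lemma len_le_length {x : Grp k F} {l : List (Fin k × Bool)} (h : wordProd k F l = x) :
    len x ≤ l.length :=
  Nat.sInf_le ⟨l, h, rfl⟩

lemma len_eq_zero {x : Grp k F} : len x = 0 ↔ x = 1 := by
  refine ⟨fun h => ?_, fun h => Nat.le_zero.1 (len_le_length (l := []) h.symm)⟩
  obtain ⟨l, hl, hlen⟩ := exists_minWord x
  rw [h, List.length_eq_zero_iff] at hlen
  subst hlen
  exact hl.symm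

lemma len_mul_le (x y : Grp k F) : len (x * y) ≤ len x + len y := by
  obtain ⟨l₁, h₁, e₁⟩ := exists_minWord x
  obtain ⟨l₂, h₂, e₂⟩ := exists_minWord y
  calc len (x * y) ≤ (l₁ ++ l₂).length := len_le_length (by rw [wordProd_append, h₁, h₂])
    _ = len x + len y := by rw [List.length_append, e₁, e₂]

lemma len_inv_le (x : Grp k F) : len x⁻¹ ≤ len x := by
  obtain ⟨l, hl, hlen⟩ := exists_minWord x
  calc len x⁻¹ ≤ (l.reverse.map letterInv).length :=
        len_le_length (by rw [wordProd_reverse_map_letterInv, hl])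
    _ = len x := by simp [hlen]

@[simp] lemma len_inv (x : Grp k F) : len x⁻¹ = len x :=
  le_antisymm (len_inv_le x) (by simpa using len_inv_le x⁻¹)

lemma len_inv_mul_comm (x y : Grp k F) : len (x⁻¹ * y) = len (y⁻¹ * x) := by
  rw [← len_inv, mul_inv_rev, inv_inv]

lemma len_sym_le (a : Fin k × Bool) : len (sym k F a) ≤ 1 :=
  len_le_length (l := [a]) (by simp [wordProd])

lemma len_le_len_add_len_inv_mul (x y : Grp k F) : len y ≤ len x + len (x⁻¹ * y) := by
  simpa using len_mul_le x (x⁻¹ * y)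

lemma len_inv_mul_le (x y z : Grp k F) :
    len (x⁻¹ * z) ≤ len (x⁻¹ * y) + len (y⁻¹ * z) := by
  simpa [mul_assoc] using len_mul_le (x⁻¹ * y) (y⁻¹ * z)

/-! ### Cancellation and reduced words -/

open Classical in
/-- Deletes the first `σ⁻¹` of `w` if every letter before it commutes with `σ`: the word for
`σ · w` after one cancellation. -/
noncomputable def cancel (F : Set (Sym2 (Fin k))) (σ : Fin k × Bool) :
    List (Fin k × Bool) → Option (List (Fin k × Bool))
  | [] => none
  | a :: w =>
    if a = letterInv σ then some w
    else if LetterCommute F σ a then (cancel F σ w).map (a :: ·) else none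

section Cancel

variable {σ a : Fin k × Bool} {w w' : List (Fin k × Bool)}

@[simp] lemma cancel_nil : cancel F σ [] = none := rfl

@[simp] lemma cancel_letterInv_cons : cancel F σ (letterInv σ :: w) = some w := by
  simp [cancel]

lemma cancel_cons_of_commute (h : LetterCommute F σ a) :
    cancel F σ (a :: w) = (cancel F σ w).map (a :: ·) := by
  simp [cancel, h, h.ne_letterInv]

lemma cancel_cons_of_not_commute (ha : a ≠ letterInv σ) (h : ¬ LetterCommute F σ a) :
    cancel F σ (a :: w) = none := by
  simp [cancel, h, ha]

lemma wordProd_of_cancel_eq_some (h : cancel F σ w = some w') :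
    sym k F σ * wordProd k F w = wordProd k F w' := by
  induction w generalizing w' with
  | nil => simp at h
  | cons a w ih =>
    by_cases ha : a = letterInv σ
    · subst ha
      simp only [cancel_letterInv_cons, Option.some.injEq] at h
      simp [h, wordProd_cons, sym_letterInv]
    by_cases hc : LetterCommute F σ a
    · rw [cancel_cons_of_commute hc] at h
      obtain ⟨v, hv, rfl⟩ := Option.map_eq_some_iff.1 h
      rw [wordProd_cons, wordProd_cons, ← ih hv, ← mul_assoc, hc.commute_sym.eq, mul_assoc]
    · simp [cancel_cons_of_not_commute ha hc] at h

lemma length_of_cancel_eq_some (h : cancel F σ w = some w') : w'.length + 1 = w.length := by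
  induction w generalizing w' with
  | nil => simp at h
  | cons a w ih =>
    by_cases ha : a = letterInv σ
    · subst ha
      simp_all
    by_cases hc : LetterCommute F σ a
    · rw [cancel_cons_of_commute hc] at h
      obtain ⟨v, hv, rfl⟩ := Option.map_eq_some_iff.1 h
      simp [← ih hv]
    · simp [cancel_cons_of_not_commute ha hc] at h

end Cancel

/-- No letter of the word is followed by its inverse with only commuting letters in between. -/
def Reduced (F : Set (Sym2 (Fin k))) : List (Fin k × Bool) → Prop
  | [] => True
  | a :: w => cancel F a w = none ∧ Reduced F w

lemma len_wordProd_lt_of_not_reduced {w : List (Fin k × Bool)} (hw : ¬ Reduced F w) :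
    len (wordProd k F w) < w.length := by
  induction w with
  | nil => exact absurd trivial hw
  | cons a w ih =>
    rw [wordProd_cons, List.length_cons]
    rcases hc : cancel F a w with _ | v
    · have := len_mul_le (sym k F a) (wordProd k F w)
      have := len_sym_le (F := F) a
      have := ih fun hr => hw ⟨hc, hr⟩
      omega
    · rw [wordProd_of_cancel_eq_some hc, ← length_of_cancel_eq_some hc]
      have := len_le_length (F := F) (x := wordProd k F v) rfl
      omega

lemma MinWord.reduced {x : Grp k F} {l : List (Fin k × Bool)} (h : MinWord x l) :
    Reduced F l :=
  Classical.byContradiction fun hl => (len_wordProd_lt_of_not_reduced hl).ne (by rw [h.1, h.2])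

lemma cancel_eq_none_of_cancel_eq_some {σ a : Fin k × Bool} {w w' : List (Fin k × Bool)}
    (hσa : LetterCommute F σ a) (ha : cancel F a w = none) (hσ : cancel F σ w = some w') :
    cancel F a w' = none := by
  induction w generalizing w' with
  | nil => simp at hσ
  | cons b w ih =>
    by_cases hb : b = letterInv σ
    · subst hb
      simp only [cancel_letterInv_cons, Option.some.injEq] at hσ
      subst hσ
      rwa [cancel_cons_of_commute (LetterCommute.letterInv_right.2 hσa.symm),
        Option.map_eq_none_iff] at ha
    by_cases hc : LetterCommute F σ b
    · rw [cancel_cons_of_commute hc] at hσ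
      obtain ⟨v, hv, rfl⟩ := Option.map_eq_some_iff.1 hσ
      by_cases hab : LetterCommute F a b
      · rw [cancel_cons_of_commute hab, Option.map_eq_none_iff] at ha ⊢
        exact ih ha hv
      · have hb' : b ≠ letterInv a := by rintro rfl; simp at ha
        exact cancel_cons_of_not_commute hb' hab
    · simp [cancel_cons_of_not_commute hb hc] at hσ

lemma Reduced.of_cancel_eq_some {σ : Fin k × Bool} {w w' : List (Fin k × Bool)}
    (hw : Reduced F w) (h : cancel F σ w = some w') : Reduced F w' := by
  induction w generalizing w' with
  | nil => simp at h
  | cons a w ih =>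
    by_cases ha : a = letterInv σ
    · subst ha
      simp only [cancel_letterInv_cons, Option.some.injEq] at h
      exact h ▸ hw.2
    by_cases hc : LetterCommute F σ a
    · rw [cancel_cons_of_commute hc] at h
      obtain ⟨v, hv, rfl⟩ := Option.map_eq_some_iff.1 h
      exact ⟨cancel_eq_none_of_cancel_eq_some hc hw.1 hv, ih hw.2 hv⟩
    · simp [cancel_cons_of_not_commute ha hc] at h

noncomputable def reduceCons (F : Set (Sym2 (Fin k))) (σ : Fin k × Bool)
    (w : List (Fin k × Bool)) : List (Fin k × Bool) :=
  (cancel F σ w).getD (σ :: w)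

section ReduceCons

variable {σ a : Fin k × Bool} {w w' : List (Fin k × Bool)}

lemma reduceCons_of_cancel_eq_none (h : cancel F σ w = none) : reduceCons F σ w = σ :: w := by
  simp [reduceCons, h]

lemma reduceCons_of_cancel_eq_some (h : cancel F σ w = some w') : reduceCons F σ w = w' := by
  simp [reduceCons, h]

@[simp] lemma reduceCons_nil : reduceCons F σ [] = [σ] := rfl

@[simp] lemma reduceCons_letterInv_cons : reduceCons F σ (letterInv σ :: w) = w :=
  reduceCons_of_cancel_eq_some cancel_letterInv_cons

lemma reduceCons_cons_of_not_commute (ha : a ≠ letterInv σ) (h : ¬ LetterCommute F σ a) :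
    reduceCons F σ (a :: w) = σ :: a :: w :=
  reduceCons_of_cancel_eq_none (cancel_cons_of_not_commute ha h)

lemma Reduced.reduceCons (hw : Reduced F w) : Reduced F (reduceCons F σ w) := by
  rcases h : cancel F σ w with _ | w'
  · rw [reduceCons_of_cancel_eq_none h]
    exact ⟨h, hw⟩
  · rw [reduceCons_of_cancel_eq_some h]
    exact hw.of_cancel_eq_some h

end ReduceCons

/-! ### Transpositions of commuting letters -/

inductive SwapStep (F : Set (Sym2 (Fin k))) : List (Fin k × Bool) → List (Fin k × Bool) → Prop
  | swap {a b : Fin k × Bool} (w : List (Fin k × Bool)) :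
      LetterCommute F a b → SwapStep F (a :: b :: w) (b :: a :: w)
  | cons (a : Fin k × Bool) {w w' : List (Fin k × Bool)} :
      SwapStep F w w' → SwapStep F (a :: w) (a :: w')

def SwapEquiv (F : Set (Sym2 (Fin k))) : List (Fin k × Bool) → List (Fin k × Bool) → Prop :=
  Relation.EqvGen (SwapStep F)

namespace SwapEquiv

variable {a b : Fin k × Bool} {u w w' : List (Fin k × Bool)}

@[refl] lemma refl (w : List (Fin k × Bool)) : SwapEquiv F w w := Relation.EqvGen.refl w

@[symm] lemma symm (h : SwapEquiv F w w') : SwapEquiv F w' w :=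
  Relation.EqvGen.symm _ _ h

@[trans] lemma trans (h : SwapEquiv F u w) (h' : SwapEquiv F w w') : SwapEquiv F u w' :=
  Relation.EqvGen.trans _ _ _ h h'

lemma of_swapStep (h : SwapStep F w w') : SwapEquiv F w w' := .rel _ _ h

lemma length_eq (h : SwapEquiv F w w') : w.length = w'.length := by
  induction h with
  | rel _ _ h => induction h <;> simp_all
  | refl => rfl
  | symm _ _ _ ih => exact ih.symm
  | trans _ _ _ _ _ ih₁ ih₂ => exact ih₁.trans ih₂

lemma map {f : List (Fin k × Bool) → List (Fin k × Bool)}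
    (hf : ∀ {w w'}, SwapStep F w w' → SwapEquiv F (f w) (f w')) (h : SwapEquiv F w w') :
    SwapEquiv F (f w) (f w') := by
  induction h with
  | rel _ _ h => exact hf h
  | refl => exact .refl _
  | symm _ _ _ ih => exact ih.symm
  | trans _ _ _ _ _ ih₁ ih₂ => exact ih₁.trans ih₂

lemma cons (a : Fin k × Bool) (h : SwapEquiv F w w') : SwapEquiv F (a :: w) (a :: w') :=
  h.map fun h => of_swapStep (.cons a h)

lemma swap (h : LetterCommute F a b) (w : List (Fin k × Bool)) :
    SwapEquiv F (a :: b :: w) (b :: a :: w) :=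
  of_swapStep (.swap w h)

end SwapEquiv

section ReduceConsSwap

variable {σ a b : Fin k × Bool} {w w' : List (Fin k × Bool)}

lemma reduceCons_cons_of_commute (h : LetterCommute F σ a) :
    SwapEquiv F (reduceCons F σ (a :: w)) (a :: reduceCons F σ w) := by
  rcases hw : cancel F σ w with _ | r
  · rw [reduceCons_of_cancel_eq_none hw,
      reduceCons_of_cancel_eq_none (by rw [cancel_cons_of_commute h, hw]; rfl)]
    exact .swap h w
  · rw [reduceCons_of_cancel_eq_some hw,
      reduceCons_of_cancel_eq_some (by rw [cancel_cons_of_commute h, hw]; rfl)]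

lemma reduceCons_swap_of_not_commute (hab : LetterCommute F a b) (ha : ¬ LetterCommute F σ a)
    (w : List (Fin k × Bool)) :
    SwapEquiv F (reduceCons F σ (a :: b :: w)) (reduceCons F σ (b :: a :: w)) := by
  by_cases hσa : a = letterInv σ
  · subst hσa
    rw [reduceCons_letterInv_cons]
    refine .symm (.trans (reduceCons_cons_of_commute (LetterCommute.letterInv_left.1 hab)) ?_)
    rw [reduceCons_letterInv_cons]
  rw [reduceCons_cons_of_not_commute hσa ha]
  have hσb : b ≠ letterInv σ := by
    rintro rfl
    exact ha (LetterCommute.letterInv_right.1 hab).symm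
  by_cases hb : LetterCommute F σ b
  · refine .trans (.cons σ (.swap hab w)) (.trans (.swap hb _) (.symm ?_))
    refine .trans (reduceCons_cons_of_commute hb) ?_
    rw [reduceCons_cons_of_not_commute hσa ha]
  · rw [reduceCons_cons_of_not_commute hσb hb]
    exact .cons σ (.swap hab w)

lemma reduceCons_swap (hab : LetterCommute F a b) (w : List (Fin k × Bool)) :
    SwapEquiv F (reduceCons F σ (a :: b :: w)) (reduceCons F σ (b :: a :: w)) := by
  by_cases ha : LetterCommute F σ a
  · by_cases hb : LetterCommute F σ b
    · refine .trans (reduceCons_cons_of_commute ha)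
        (.trans (.cons a (reduceCons_cons_of_commute hb)) (.trans (.swap hab _) ?_))
      exact .symm (.trans (reduceCons_cons_of_commute hb)
        (.cons b (reduceCons_cons_of_commute ha)))
    · exact .symm (reduceCons_swap_of_not_commute hab.symm hb w)
  · exact reduceCons_swap_of_not_commute hab ha w

lemma reduceCons_swapStep (h : SwapStep F w w') :
    SwapEquiv F (reduceCons F σ w) (reduceCons F σ w') := by
  induction h with
  | swap w hab => exact reduceCons_swap hab w
  | cons c h ih =>
    by_cases hc : c = letterInv σ
    · subst hc
      simpa using SwapEquiv.of_swapStep h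
    by_cases hσc : LetterCommute F σ c
    · exact .trans (reduceCons_cons_of_commute hσc)
        (.trans (.cons c ih) (.symm (reduceCons_cons_of_commute hσc)))
    · rw [reduceCons_cons_of_not_commute hc hσc, reduceCons_cons_of_not_commute hc hσc]
      exact .cons σ (.cons c (.of_swapStep h))

lemma SwapEquiv.reduceCons (h : SwapEquiv F w w') :
    SwapEquiv F (reduceCons F σ w) (reduceCons F σ w') :=
  h.map reduceCons_swapStep

end ReduceConsSwap

section ReduceConsAction

variable {σ τ a : Fin k × Bool} {w : List (Fin k × Bool)}

@[simp] lemma reduceCons_letterInv_of_cons : reduceCons F (letterInv σ) (σ :: w) = w := by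
  simpa using reduceCons_letterInv_cons (F := F) (σ := letterInv σ) (w := w)

lemma reduceCons_letterInv_reduceCons (hw : Reduced F w) :
    SwapEquiv F (reduceCons F (letterInv σ) (reduceCons F σ w)) w := by
  induction w with
  | nil => rw [reduceCons_nil, reduceCons_letterInv_of_cons]
  | cons a t ih =>
    by_cases ha : a = letterInv σ
    · subst ha
      rw [reduceCons_letterInv_cons, reduceCons_of_cancel_eq_none hw.1]
    by_cases hσa : LetterCommute F σ a
    · exact .trans (SwapEquiv.reduceCons (reduceCons_cons_of_commute hσa))
        (.trans (reduceCons_cons_of_commute (LetterCommute.letterInv_left.2 hσa))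
          (.cons a (ih hw.2)))
    · rw [reduceCons_cons_of_not_commute ha hσa, reduceCons_letterInv_of_cons]

lemma reduceCons_comm_letterInv_cons (hστ : LetterCommute F σ τ) (w : List (Fin k × Bool)) :
    SwapEquiv F (reduceCons F σ (reduceCons F τ (letterInv σ :: w)))
      (reduceCons F τ (reduceCons F σ (letterInv σ :: w))) := by
  refine .trans (SwapEquiv.reduceCons (reduceCons_cons_of_commute ?_)) ?_
  · exact LetterCommute.letterInv_right.2 hστ.symm
  · rw [reduceCons_letterInv_cons, reduceCons_letterInv_cons]

lemma reduceCons_comm_of_not_commute (hστ : LetterCommute F σ τ) (haσ : a ≠ letterInv σ)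
    (haτ : a ≠ letterInv τ) (hτa : ¬ LetterCommute F τ a) (w : List (Fin k × Bool)) :
    SwapEquiv F (reduceCons F σ (reduceCons F τ (a :: w)))
      (reduceCons F τ (reduceCons F σ (a :: w))) := by
  rw [reduceCons_cons_of_not_commute haτ hτa]
  refine .trans (reduceCons_cons_of_commute hστ) ?_
  by_cases hσa : LetterCommute F σ a
  · refine .trans (.cons τ (reduceCons_cons_of_commute hσa)) (.symm ?_)
    refine .trans (SwapEquiv.reduceCons (reduceCons_cons_of_commute hσa)) ?_
    rw [reduceCons_cons_of_not_commute haτ hτa]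
  · rw [reduceCons_cons_of_not_commute haσ hσa]
    refine .trans (.swap hστ.symm _) (.symm (.trans (reduceCons_cons_of_commute hστ.symm) ?_))
    rw [reduceCons_cons_of_not_commute haτ hτa]

lemma reduceCons_comm (hστ : LetterCommute F σ τ) (w : List (Fin k × Bool)) :
    SwapEquiv F (reduceCons F σ (reduceCons F τ w)) (reduceCons F τ (reduceCons F σ w)) := by
  induction w with
  | nil =>
    rw [reduceCons_nil, reduceCons_nil]
    exact .trans (reduceCons_cons_of_commute hστ)
      (.symm (.trans (reduceCons_cons_of_commute hστ.symm) (.swap hστ [])))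
  | cons a t ih =>
    by_cases haσ : a = letterInv σ
    · exact haσ ▸ reduceCons_comm_letterInv_cons hστ t
    by_cases haτ : a = letterInv τ
    · exact haτ ▸ .symm (reduceCons_comm_letterInv_cons hστ.symm t)
    by_cases hτa : LetterCommute F τ a
    · by_cases hσa : LetterCommute F σ a
      · refine .trans (SwapEquiv.reduceCons (reduceCons_cons_of_commute hτa))
          (.trans (reduceCons_cons_of_commute hσa) (.trans (.cons a ih) (.symm ?_)))
        exact .trans (SwapEquiv.reduceCons (reduceCons_cons_of_commute hσa))
          (reduceCons_cons_of_commute hτa)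
      · exact .symm (reduceCons_comm_of_not_commute hστ.symm haτ haσ hσa t)
    · exact reduceCons_comm_of_not_commute hστ haσ haτ hτa t

end ReduceConsAction

/-! ### The action of `G_F` on normal forms -/

def reducedSetoid (F : Set (Sym2 (Fin k))) : Setoid {w : List (Fin k × Bool) // Reduced F w} :=
  (Relation.EqvGen.setoid (SwapStep F)).comap Subtype.val

abbrev NormalForm (k : ℕ) (F : Set (Sym2 (Fin k))) := Quotient (reducedSetoid F)

namespace NormalForm

noncomputable def reduceCons (σ : Fin k × Bool) : NormalForm k F → NormalForm k F :=
  Quotient.map (fun w => ⟨GraphGroupPaper.reduceCons F σ w.1, w.2.reduceCons⟩)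
    fun _ _ h => SwapEquiv.reduceCons h

lemma reduceCons_mk (σ : Fin k × Bool) (w : {w // Reduced F w}) :
    reduceCons σ ⟦w⟧ = ⟦⟨GraphGroupPaper.reduceCons F σ w.1, w.2.reduceCons⟩⟧ := rfl

lemma reduceCons_letterInv_reduceCons (σ : Fin k × Bool) (x : NormalForm k F) :
    reduceCons (letterInv σ) (reduceCons σ x) = x := by
  induction x using Quotient.inductionOn with
  | h w => exact Quotient.sound (GraphGroupPaper.reduceCons_letterInv_reduceCons w.2)

noncomputable def genPerm (i : Fin k) : Equiv.Perm (NormalForm k F) where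
  toFun := reduceCons (i, true)
  invFun := reduceCons (i, false)
  left_inv := reduceCons_letterInv_reduceCons (i, true)
  right_inv := reduceCons_letterInv_reduceCons (i, false)

lemma genPerm_commute {i j : Fin k} (hij : i ≠ j) (hF : s(i, j) ∉ F) :
    Commute (genPerm (F := F) i) (genPerm j) := by
  refine Equiv.ext fun x => ?_
  induction x using Quotient.inductionOn with
  | h w => exact Quotient.sound (GraphGroupPaper.reduceCons_comm (σ := (i, true))
      (τ := (j, true)) ⟨hij, hF⟩ w.1)

noncomputable def action : Grp k F →* Equiv.Perm (NormalForm k F) :=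
  PresentedGroup.toGroup (f := genPerm) <| by
    rintro _ ⟨i, j, hij, hF, rfl⟩
    simpa [commutatorElement_def] using
      commutatorElement_eq_one_iff_commute.2 (genPerm_commute hij hF)

lemma action_sym (a : Fin k × Bool) (x : NormalForm k F) :
    action (sym k F a) x = reduceCons a x := by
  obtain ⟨i, _ | _⟩ := a <;> rfl

lemma action_wordProd {w : List (Fin k × Bool)} (hw : Reduced F w) :
    action (wordProd k F w) ⟦⟨[], trivial⟩⟧ = ⟦⟨w, hw⟩⟧ := by
  induction w with
  | nil => rfl
  | cons a t ih =>
    rw [wordProd_cons, map_mul, Equiv.Perm.mul_apply, ih hw.2, action_sym, reduceCons_mk]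
    congr 2
    exact reduceCons_of_cancel_eq_none hw.1

end NormalForm

lemma swapEquiv_of_wordProd_eq {w₁ w₂ : List (Fin k × Bool)} (h₁ : Reduced F w₁)
    (h₂ : Reduced F w₂) (h : wordProd k F w₁ = wordProd k F w₂) : SwapEquiv F w₁ w₂ :=
  Quotient.exact <| show (⟦⟨w₁, h₁⟩⟧ : NormalForm k F) = ⟦⟨w₂, h₂⟩⟧ by
    rw [← NormalForm.action_wordProd h₁, ← NormalForm.action_wordProd h₂, h]

theorem Reduced.len_wordProd {w : List (Fin k × Bool)} (hw : Reduced F w) :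
    len (wordProd k F w) = w.length := by
  obtain ⟨l, hl, hlen⟩ := exists_minWord (wordProd k F w)
  rw [← hlen, (swapEquiv_of_wordProd_eq hw (MinWord.reduced ⟨hl, hlen⟩) hl.symm).length_eq]

/-! ### The exchange property and convexity -/

lemma commute_of_cancel_append_eq_some {c : Fin k × Bool} {q w r : List (Fin k × Bool)}
    (hq : cancel F c q = none) (h : cancel F c (q ++ w) = some r) :
    (∀ b ∈ q, LetterCommute F c b) ∧ ∃ w', cancel F c w = some w' := by
  induction q generalizing r with
  | nil => exact ⟨by simp, r, h⟩
  | cons b q ih =>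
    by_cases hb : b = letterInv c
    · subst hb
      simp at hq
    by_cases hcb : LetterCommute F c b
    · rw [cancel_cons_of_commute hcb, Option.map_eq_none_iff] at hq
      rw [List.cons_append, cancel_cons_of_commute hcb] at h
      obtain ⟨v, hv, -⟩ := Option.map_eq_some_iff.1 h
      obtain ⟨hcomm, hw⟩ := ih hq hv
      exact ⟨List.forall_mem_cons.2 ⟨hcb, hcomm⟩, hw⟩
    · simp [cancel_cons_of_not_commute hb hcb] at h

lemma exists_cancel_of_not_reduced_append {u w : List (Fin k × Bool)} (hu : Reduced F u)
    (hw : Reduced F w) (h : ¬ Reduced F (u ++ w)) :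
    ∃ p c q w', u = p ++ c :: q ∧ (∀ b ∈ q, LetterCommute F c b) ∧
      cancel F c w = some w' := by
  induction u with
  | nil => exact absurd hw h
  | cons a u ih =>
    by_cases hr : Reduced F (u ++ w)
    · obtain ⟨r, hr'⟩ := Option.ne_none_iff_exists'.1 fun hc => h ⟨hc, hr⟩
      obtain ⟨hcomm, w', hw'⟩ := commute_of_cancel_append_eq_some hu.1 hr'
      exact ⟨[], a, u, w', rfl, hcomm, hw'⟩
    · obtain ⟨p, c, q, w', rfl, hq, hc⟩ := ih hu.2 hr
      exact ⟨a :: p, c, q, w', rfl, hq, hc⟩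

theorem exists_sym_of_len_mul_lt {x y : Grp k F} (h : len (x * y) < len x + len y) :
    ∃ c, len (x * (sym k F c)⁻¹) < len x ∧ len (sym k F c * y) < len y := by
  obtain ⟨u, hux, hu⟩ := exists_minWord x
  obtain ⟨w, hwy, hw⟩ := exists_minWord y
  have hnr : ¬ Reduced F (u ++ w) := fun hr => by
    have := hr.len_wordProd
    rw [wordProd_append, hux, hwy, List.length_append, hu, hw] at this
    omega
  obtain ⟨p, c, q, w', rfl, hq, hc⟩ := exists_cancel_of_not_reduced_append
    (MinWord.reduced ⟨hux, hu⟩) (MinWord.reduced ⟨hwy, hw⟩) hnr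
  refine ⟨c, ?_, ?_⟩
  · have hpq : wordProd k F (p ++ q) = x * (sym k F c)⁻¹ := by
      rw [← hux, wordProd_append, wordProd_append, wordProd_cons, ← mul_assoc,
        mul_assoc _ (sym k F c), (commute_sym_wordProd hq).eq]
      group
    have := len_le_length hpq
    simp only [List.length_append, List.length_cons] at this hu
    omega
  · have hlen := length_of_cancel_eq_some hc
    have := len_le_length (wordProd_of_cancel_eq_some hc).symm
    rw [hwy] at this
    omega

namespace le

variable {x y z : Grp k F}

protected lemma refl (x : Grp k F) : le x x := by
  simp [le, len_eq_zero.2]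

protected lemma trans (h₁ : le x y) (h₂ : le y z) : le x z := by
  have := len_inv_mul_le x y z
  have := len_le_len_add_len_inv_mul x z
  unfold le at *
  omega

lemma len_lt (h : le x y) (hne : x ≠ y) : len x < len y := by
  have : len (x⁻¹ * y) ≠ 0 := fun h0 => hne (inv_mul_eq_one.1 (len_eq_zero.1 h0))
  unfold le at h
  omega

end le

lemma exists_minimalIn_le {S : Set (Grp k F)} {s : Grp k F} (hs : s ∈ S) :
    ∃ m, MinimalIn S m ∧ le m s := by
  induction hn : len s using Nat.strong_induction_on generalizing s with
  | _ n ih =>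
  by_cases hmin : MinimalIn S s
  · exact ⟨s, hmin, le.refl s⟩
  obtain ⟨x, hxS, hxs, hne⟩ : ∃ x ∈ S, le x s ∧ x ≠ s := by
    simpa [MinimalIn, hs] using hmin
  obtain ⟨m, hm, hmx⟩ := ih _ (hn ▸ hxs.len_lt hne) hxS rfl
  exact ⟨m, hm, hmx.trans hxs⟩

lemma dist_mul_left (a x y : Grp k F) : dist (a * x) (a * y) = dist x y := by
  simp [dist, mul_assoc]

lemma ConvexSet.image_mul_left {L : Set (Grp k F)} (hL : ConvexSet L) (a : Grp k F) :
    ConvexSet ((a * ·) '' L) := by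
  refine ⟨hL.1.image _, ?_⟩
  rintro _ _ y ⟨x, hx, rfl⟩ ⟨z, hz, rfl⟩ hd
  refine ⟨a⁻¹ * y, hL.2 x z _ hx hz ?_, mul_inv_cancel_left a y⟩
  rwa [← dist_mul_left a x, ← dist_mul_left a _ z, ← dist_mul_left a x z, mul_inv_cancel_left]

theorem ConvexSet.eq_of_minimalIn {S : Set (Grp k F)} (hS : ConvexSet S) {m₁ m₂ : Grp k F}
    (h₁ : MinimalIn S m₁) (h₂ : MinimalIn S m₂) : m₁ = m₂ := by
  by_contra hne
  have hlt : len (m₁ * (m₁⁻¹ * m₂)) < len m₁ + len (m₁⁻¹ * m₂) := by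
    rw [mul_inv_cancel_left]
    exact lt_of_le_of_ne (len_le_len_add_len_inv_mul m₁ m₂) fun h => hne (h₂.2 m₁ h₁.1 h)
  obtain ⟨c, hc₁, hc₂⟩ := exists_sym_of_len_mul_lt hlt
  set y := m₁ * (sym k F c)⁻¹
  have hym₁ : y⁻¹ * m₁ = sym k F c := by simp [y]
  have hym₂ : y⁻¹ * m₂ = sym k F c * (m₁⁻¹ * m₂) := by simp [y, mul_assoc]
  have hc := len_sym_le (F := F) c
  have htri := len_le_len_add_len_inv_mul y m₁
  have hyS : y ∈ S := hS.2 m₁ m₂ y h₁.1 h₂.1 <| by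
    have := len_inv_mul_le m₁ y m₂
    rw [len_inv_mul_comm m₁ y, hym₁, hym₂] at this
    rw [dist, dist, dist, len_inv_mul_comm m₁ y, hym₁, hym₂]
    omega
  have hyle : le y m₁ := by
    rw [le, hym₁]
    rw [hym₁] at htri
    omega
  exact hc₁.ne (congrArg len (h₁.2 y hyS hyle))

lemma convexSet_of_existsUnique_minimalIn {L : Set (Grp k F)} (hL : L.Nonempty)
    (h : ∀ a : Grp k F, ∃! m, MinimalIn ((a * ·) '' L) m) : ConvexSet L := by
  refine ⟨hL, fun x z y hx hz hd => ?_⟩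
  obtain ⟨m, hm, huniq⟩ := h y⁻¹
  have hleast : ∀ s ∈ (y⁻¹ * ·) '' L, le m s := fun s hs => by
    obtain ⟨m', hm', hle⟩ := exists_minimalIn_le hs
    rwa [huniq m' hm'] at hle
  have h₁ : le m (y⁻¹ * x) := hleast _ ⟨x, hx, rfl⟩
  have h₂ : le m (y⁻¹ * z) := hleast _ ⟨z, hz, rfl⟩
  have htri := len_inv_mul_le (y⁻¹ * x) m (y⁻¹ * z)
  rw [len_inv_mul_comm _ m, show (y⁻¹ * x)⁻¹ * (y⁻¹ * z) = x⁻¹ * z by group] at htri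
  rw [dist, dist, dist, len_inv_mul_comm x y] at hd
  unfold le at h₁ h₂
  obtain ⟨x₀, hx₀, hm₀⟩ := hm.1
  have hm1 : m = 1 := len_eq_zero.1 (by omega)
  rw [hm1, inv_mul_eq_one] at hm₀
  exact hm₀ ▸ hx₀

theorem stmt6_general {k : ℕ} {F : Set (Sym2 (Fin k))}
    (L : Set (Grp k F)) (hL : L.Nonempty) :
    ConvexSet L ↔ ∀ a : Grp k F, ∃! m, MinimalIn ((a * ·) '' L) m := by
  refine ⟨fun hconv a => ?_, convexSet_of_existsUnique_minimalIn hL⟩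
  have haL := hconv.image_mul_left a
  obtain ⟨m, hm, -⟩ := exists_minimalIn_le haL.1.some_mem
  exact ⟨m, hm, fun m' hm' => haL.eq_of_minimalIn hm' hm⟩

/-- a nonempty `L` is convex iff for each `a`, the set `aL` has a
unique minimal element w.r.t. `≤`. -/
theorem stmt6 {k : ℕ} (hk : 1 ≤ k) {F : Set (Sym2 (Fin k))}
    (L : Set (Grp k F)) (hL : L.Nonempty) :
    ConvexSet L ↔ ∀ a : Grp k F, ∃! m, MinimalIn ((a * ·) '' L) m :=
  stmt6_general L hL

end GraphGroupPaper
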